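/- arXiv:2402.09950 — 5 statements merged into one kernel-verified Lean document; each statement's English description precedes it below -/
import Mathlib

section
/- If X is an infinite-dimensional normed vector space, then every non-empty open ball B of X contains a sequence of pairwise disjoint non-empty open balls (B_n) all having the same radius. -/
/-! Riesz's lemma gives a sequence in the closed ball of radius `2` about `0` whose points are at
mutual distance at least `1`. Rescaled into `B(x; r)`, these points lie within `r / 2` of `x` and are
`r / 4`-separated, so the balls of radius `r / 8` around them stay inside `B(x; r)` and are
pairwise disjoint. -/

open Metric

theorem exists_seq_dist_le_le_dist_of_not_finiteDimensional {X : Type*}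
    [NormedAddCommGroup X] [NormedSpace ℝ X] (h : ¬ FiniteDimensional ℝ X) (x : X)
    {ε : ℝ} (hε : 0 < ε) :
    ∃ y : ℕ → X, (∀ n, dist (y n) x ≤ ε) ∧ Pairwise fun m n => ε / 2 ≤ dist (y m) (y n) := by
  obtain ⟨f, hf_norm, hf_sep⟩ :=
    exists_seq_norm_le_one_le_norm_sub' (c := (3 / 2 : ℝ)) (R := 2) (by norm_num) (by norm_num) h
  have hε2 : 0 ≤ ε / 2 := by positivity
  refine ⟨fun n => x + (ε / 2) • f n, fun n => ?_, fun m n hmn => ?_⟩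
  · calc dist (x + (ε / 2) • f n) x = ε / 2 * ‖f n‖ := by
          rw [dist_eq_norm, add_sub_cancel_left, norm_smul, Real.norm_of_nonneg hε2]
      _ ≤ ε / 2 * 2 := by gcongr; exact hf_norm n
      _ = ε := by ring
  · calc ε / 2 = ε / 2 * 1 := (mul_one _).symm
      _ ≤ ε / 2 * ‖f m - f n‖ := by gcongr; exact hf_sep hmn
      _ = dist (x + (ε / 2) • f m) (x + (ε / 2) • f n) := by
          rw [dist_add_left, dist_eq_norm, ← smul_sub, norm_smul, Real.norm_of_nonneg hε2]

/-- In an infinite-dimensional normed vector space, every non-empty open ball contains a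
sequence of pairwise disjoint non-empty open balls all of the same radius. -/
theorem exists_disjoint_balls_of_infinite_dimensional
    {X : Type*} [NormedAddCommGroup X] [NormedSpace ℝ X]
    (h : ¬ FiniteDimensional ℝ X) (x : X) (r : ℝ) (hr : 0 < r) :
    ∃ r' : ℝ, 0 < r' ∧ ∃ y : ℕ → X,
      (∀ n, Metric.ball (y n) r' ⊆ Metric.ball x r) ∧
      (∀ m n, m ≠ n → Metric.ball (y m) r' ∩ Metric.ball (y n) r' = ∅) := by
  obtain ⟨y, hy_near, hy_sep⟩ :=
    exists_seq_dist_le_le_dist_of_not_finiteDimensional h x (half_pos hr)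
  refine ⟨r / 8, by positivity, y, fun n => ?_, fun m n hmn => ?_⟩
  · exact ball_subset_ball' (by linarith [hy_near n])
  · exact Set.disjoint_iff_inter_eq_empty.mp (ball_disjoint_ball (by linarith [hy_sep hmn]))
end

section
/- Let X be a separable infinite-dimensional normed vector space and μ a Borel measure on X such that μ(B(x,r)) = μ(B(x',r)) for all x, x' ∈ X and r > 0. Then either μ is identically zero, or μ(O) = ∞ for every non-empty open subset O of X. -/
open Function MeasureTheory Metric

/-!
A nonzero measure charges every ball: by separability, countably many balls of a fixed radius
cover `X`, and they all have the same measure. In infinite dimension, Riesz's lemma yields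
infinitely many pairwise disjoint balls of a common radius inside any ball; each has the same
positive measure, so every ball, hence every non-empty open set, has infinite measure.
-/

theorem measure_eq_zero_of_forall_measure_ball_eq_zero {X : Type*} [PseudoMetricSpace X]
    [TopologicalSpace.SeparableSpace X] [MeasurableSpace X] {μ : Measure X} {r : ℝ}
    (hr : 0 < r) (h : ∀ x, μ (ball x r) = 0) : μ = 0 :=
  Measure.measure_univ_eq_zero.1 <| measure_null_of_locally_null _ fun x _ =>
    ⟨ball x r, mem_nhdsWithin_of_mem_nhds (ball_mem_nhds x hr), h x⟩

theorem measure_eq_top_of_pairwise_disjoint_subset {X ι : Type*} [MeasurableSpace X] [Infinite ι]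
    {μ : Measure X} {s : Set X} {A : ι → Set X} (hA : ∀ i, MeasurableSet (A i))
    (hdisj : Pairwise (Disjoint on A)) (hsub : ∀ i, A i ⊆ s) {m : ENNReal} (hm : m ≠ 0)
    (hle : ∀ i, m ≤ μ (A i)) : μ s = ⊤ :=
  top_le_iff.1 <| calc
    ⊤ = ∑' _ : ι, m := (ENNReal.tsum_const_eq_top_of_ne_zero hm).symm
    _ ≤ ∑' i, μ (A i) := ENNReal.tsum_le_tsum hle
    _ ≤ μ (⋃ i, A i) := tsum_meas_le_meas_iUnion_of_disjoint μ hA hdisj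
    _ ≤ μ s := measure_mono (Set.iUnion_subset hsub)

theorem exists_pairwise_disjoint_balls_subset_ball {E : Type*} [NormedAddCommGroup E]
    [NormedSpace ℝ E] (hE : ¬ FiniteDimensional ℝ E) (x : E) {t : ℝ} (ht : 0 < t) :
    ∃ ρ > 0, ∃ c : ℕ → E, Pairwise (Disjoint on fun n => ball (c n) ρ) ∧
      ∀ n, ball (c n) ρ ⊆ ball x t := by
  obtain ⟨R, f, hR, hfR, hf⟩ := exists_seq_norm_le_one_le_norm_sub hE
  have hR0 : 0 < R := one_pos.trans hR
  -- centres `x + a • f n` are `a`-separated and lie within `a * R = t / 2` of `x`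
  set a := t / (2 * R)
  have ha : 0 < a := by positivity
  refine ⟨a / 2, half_pos ha, fun n => x + a • f n, fun m n hmn => ?_, fun n => ?_⟩
  · refine ball_disjoint_ball ?_
    calc a / 2 + a / 2 = a := add_halves a
      _ ≤ a * ‖f m - f n‖ := le_mul_of_one_le_right ha.le (hf hmn)
      _ = dist (x + a • f m) (x + a • f n) := by
        rw [dist_add_left, dist_eq_norm, ← smul_sub, norm_smul, Real.norm_of_nonneg ha.le]
  · refine ball_subset_ball' ?_
    have hdist : dist (x + a • f n) x ≤ a * R := by
      rw [dist_self_add_left, norm_smul, Real.norm_of_nonneg ha.le]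
      exact mul_le_mul_of_nonneg_left (hfR n) ha.le
    have haR : a * R = t / 2 := by simp only [a]; field_simp
    have ha_le : a ≤ t / 2 := haR ▸ le_mul_of_one_le_right ha.le hR.le
    linarith

/-- If `X` is a separable infinite-dimensional normed vector space and `μ` is a Borel
measure assigning equal measure to all open balls of equal radius, then either `μ = 0` or
`μ(O) = ∞` for every non-empty open set `O`. -/
theorem measure_eq_zero_or_open_infinite
    {X : Type*} [NormedAddCommGroup X] [NormedSpace ℝ X]
    [TopologicalSpace.SeparableSpace X] [MeasurableSpace X] [BorelSpace X]
    (hX : ¬ FiniteDimensional ℝ X) (μ : Measure X)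
    (h : ∀ (x x' : X) (r : ℝ), 0 < r → μ (Metric.ball x r) = μ (Metric.ball x' r)) :
    μ = 0 ∨ ∀ O : Set X, IsOpen O → O.Nonempty → μ O = ⊤ := by
  refine or_iff_not_imp_left.2 fun hμ O hO ⟨x, hx⟩ => ?_
  obtain ⟨t, ht, hball⟩ := isOpen_iff.1 hO x hx
  obtain ⟨ρ, hρ, c, hdisj, hsub⟩ := exists_pairwise_disjoint_balls_subset_ball hX x ht
  have hne : μ (ball x ρ) ≠ 0 := fun h0 =>
    hμ (measure_eq_zero_of_forall_measure_ball_eq_zero hρ fun y => (h y x ρ hρ).trans h0)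
  exact measure_eq_top_of_pairwise_disjoint_subset (fun _ => measurableSet_ball) hdisj
    (fun n => (hsub n).trans hball) hne fun n => (h (c n) x ρ hρ).ge
end

section
/- For every non-empty open subset O of ℓ² and every r > 0, P_r(O) > 0, i.e., the Gaussian product measure P_r on ℓ² is strictly positive. -/
open MeasureTheory ProbabilityTheory

noncomputable instance : MeasurableSpace (lp (fun _ : ℕ => ℝ) 2) := borel _
instance : BorelSpace (lp (fun _ : ℕ => ℝ) 2) := ⟨rfl⟩

/-- `μ` is the Gaussian product measure on `ℓ²` with component variances `r²a_i²`,
characterized by its values on cylinder sets. -/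
def IsGaussianProduct (a : ℕ → ℝ) (r : ℝ) (μ : Measure (lp (fun _ : ℕ => ℝ) 2)) : Prop :=
  ∀ (n : ℕ) (F : Set (Fin n → ℝ)), MeasurableSet F →
    μ {x | (fun i : Fin n => x i) ∈ F}
      = Measure.pi (fun i : Fin n => gaussianReal 0 (Real.toNNReal ((r * a i) ^ 2))) F

/-! Fix `z ∈ O` with `ball z ε ⊆ O`. The set of `x` whose first `N` coordinates lie in an open
set `A` close to those of `z` and whose tail beyond `N` has squared norm at most `ε² / 8` lies in
`ball z ε` as soon as the tail of `z` is that small too. It is the decreasing limit of cylinder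
sets, and by independence each of them has measure `P(A) · P(∑_{N ≤ j < N + m} x_j² ≤ ε² / 8)`.
The first factor is positive since Gaussians charge open sets, and by Chebyshev the second is at
least `1/2` once `N` is so large that `2 ∑_{j ≥ N} r² a_j² ≤ ε² / 8`. -/

open scoped ENNReal NNReal lp

lemma Summable.sq {ι : Type*} {f : ι → ℝ} (hf : Summable f) : Summable fun i => f i ^ 2 := by
  refine hf.abs.of_norm_bounded_eventually ?_
  filter_upwards [hf.tendsto_cofinite_zero.eventually (Metric.closedBall_mem_nhds 0 one_pos)]
    with i hi
  rw [dist_zero_right, Real.norm_eq_abs] at hi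
  rw [Real.norm_eq_abs, abs_pow, _root_.sq]
  exact mul_le_of_le_one_left (abs_nonneg _) hi

lemma lintegral_sq_gaussianReal_zero (v : ℝ≥0) :
    ∫⁻ x, ENNReal.ofReal (x ^ 2) ∂gaussianReal 0 v = v := by
  have hint : Integrable (fun x : ℝ => x ^ 2) (gaussianReal 0 v) :=
    (memLp_id_gaussianReal 2).integrable_sq
  rw [← ofReal_integral_eq_lintegral_ofReal hint (ae_of_all _ fun x => sq_nonneg x),
    ← variance_of_integral_eq_zero aemeasurable_id' integral_id_gaussianReal,
    variance_fun_id_gaussianReal, ENNReal.ofReal_coe_nnreal]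

lemma lintegral_sum_sq_pi_gaussianReal {ι : Type*} [Fintype ι] (v : ι → ℝ≥0) :
    ∫⁻ w, ENNReal.ofReal (∑ i, w i ^ 2) ∂Measure.pi (fun i => gaussianReal 0 (v i))
      = ∑ i, (v i : ℝ≥0∞) := by
  simp_rw [ENNReal.ofReal_sum_of_nonneg fun i _ => sq_nonneg _]
  rw [lintegral_finsetSum _ fun i _ => by fun_prop]
  refine Finset.sum_congr rfl fun i _ => ?_
  exact ((measurePreserving_eval (fun i => gaussianReal 0 (v i)) i).lintegral_comp
    (f := fun x : ℝ => ENNReal.ofReal (x ^ 2)) (by fun_prop)).trans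
    (lintegral_sq_gaussianReal_zero _)

lemma half_le_pi_gaussianReal_sum_sq_le {ι : Type*} [Fintype ι] (v : ι → ℝ≥0) {t : ℝ}
    (ht : 0 < t) (hv : 2 * ∑ i, (v i : ℝ) ≤ t) :
    2⁻¹ ≤ Measure.pi (fun i => gaussianReal 0 (v i)) {w | ∑ i, w i ^ 2 ≤ t} := by
  set ν := Measure.pi (fun i => gaussianReal 0 (v i))
  have markov : ENNReal.ofReal t * ν {w | ENNReal.ofReal t ≤ ENNReal.ofReal (∑ i, w i ^ 2)}
      ≤ ∑ i, (v i : ℝ≥0∞) :=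
    lintegral_sum_sq_pi_gaussianReal v ▸
      mul_meas_ge_le_lintegral₀ (Measurable.aemeasurable (by fun_prop)) _
  have hsum : ∑ i, (v i : ℝ≥0∞) ≤ 2⁻¹ * ENNReal.ofReal t := by
    have hcast : ∑ i, (v i : ℝ≥0∞) = ENNReal.ofReal (∑ i, (v i : ℝ)) := by
      simp [ENNReal.ofReal_sum_of_nonneg]
    rw [hcast, ← ENNReal.ofReal_ofNat 2, ← ENNReal.ofReal_inv_of_pos two_pos,
      ← ENNReal.ofReal_mul (by norm_num)]
    exact ENNReal.ofReal_le_ofReal (by linarith)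
  have hcompl : ν {w | ∑ i, w i ^ 2 ≤ t}ᶜ ≤ 2⁻¹ := calc
    _ ≤ ν {w | ENNReal.ofReal t ≤ ENNReal.ofReal (∑ i, w i ^ 2)} :=
      measure_mono fun w hw => ENNReal.ofReal_le_ofReal (not_le.1 hw).le
    _ ≤ 2⁻¹ := by
      rw [← ENNReal.mul_le_mul_iff_right (ENNReal.ofReal_pos.2 ht).ne' ENNReal.ofReal_ne_top]
      exact markov.trans (hsum.trans_eq (mul_comm _ _))
  rw [prob_compl_eq_one_sub (measurableSet_le (by fun_prop) measurable_const)] at hcompl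
  calc (2⁻¹ : ℝ≥0∞) = 1 - 2⁻¹ := ENNReal.one_sub_inv_two.symm
    _ ≤ 1 - (1 - ν {w | ∑ i, w i ^ 2 ≤ t}) := tsub_le_tsub_left hcompl 1
    _ = _ := ENNReal.sub_sub_cancel ENNReal.one_ne_top prob_le_one

lemma isOpenPosMeasure_pi_gaussianReal {ι : Type*} [Fintype ι] (m : ι → ℝ) {v : ι → ℝ≥0}
    (hv : ∀ i, v i ≠ 0) : (Measure.pi fun i => gaussianReal (m i) (v i)).IsOpenPosMeasure :=
  have (i : ι) := (gaussianReal_absolutelyContinuous' (m i) (hv i)).isOpenPosMeasure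
  inferInstance

theorem MeasureTheory.Measure.pi_castAdd_natAdd {α : Type*} [MeasurableSpace α] {n m : ℕ}
    (κ : Fin (n + m) → Measure α) [∀ i, SigmaFinite (κ i)]
    (A : Set (Fin n → α)) (B : Set (Fin m → α)) :
    Measure.pi κ {w | (fun i => w (Fin.castAdd m i)) ∈ A ∧ (fun j => w (Fin.natAdd n j)) ∈ B}
      = Measure.pi (fun i => κ (Fin.castAdd m i)) A
        * Measure.pi (fun j => κ (Fin.natAdd n j)) B := by
  let e := (MeasurableEquiv.sumPiEquivProdPi fun _ : Fin n ⊕ Fin m => α).symm.trans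
    (MeasurableEquiv.piCongrLeft (fun _ => α) finSumFinEquiv)
  have he : MeasurePreserving e ((Measure.pi fun i => κ (Fin.castAdd m i)).prod
      (Measure.pi fun j => κ (Fin.natAdd n j))) (Measure.pi κ) :=
    (measurePreserving_piCongrLeft κ finSumFinEquiv).comp
      (measurePreserving_sumPiEquivProdPi_symm fun s => κ (finSumFinEquiv s))
  rw [← he.map_eq, e.map_apply, ← Measure.prod_prod]
  congr 1
  ext ⟨u, w⟩
  have head (i : Fin n) : e (u, w) (Fin.castAdd m i) = u i := by
    rw [← finSumFinEquiv_apply_left]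
    exact Equiv.piCongrLeft_sumInl (fun _ => α) finSumFinEquiv u w i
  have tail (j : Fin m) : e (u, w) (Fin.natAdd n j) = w j := by
    rw [← finSumFinEquiv_apply_right]
    exact Equiv.piCongrLeft_sumInr (fun _ => α) finSumFinEquiv u w j
  simp only [Set.mem_preimage, Set.mem_ofPred_eq, Set.mem_prod, head, tail]

lemma lp.hasSum_sq {ι : Type*} (x : ℓ²(ι, ℝ)) : HasSum (fun i => x i ^ 2) (‖x‖ ^ 2) := by
  have h := lp.hasSum_norm (p := 2) (by norm_num) x
  norm_num only [ENNReal.toReal_ofNat, Real.rpow_two, Real.norm_eq_abs, sq_abs] at h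
  exact h

lemma lp.norm_sub_sq_le_head_add_tails (y z : ℓ²(ℕ, ℝ)) (N : ℕ) :
    ‖y - z‖ ^ 2 ≤ ∑ i : Fin N, (y i - z i) ^ 2
      + (2 * ∑' j, y (j + N) ^ 2 + 2 * ∑' j, z (j + N) ^ 2) := by
  have hy := ((summable_nat_add_iff N).2 (lp.hasSum_sq y).summable).mul_left 2
  have hz := ((summable_nat_add_iff N).2 (lp.hasSum_sq z).summable).mul_left 2
  have hyz := (summable_nat_add_iff N).2 (lp.hasSum_sq (y - z)).summable
  rw [← (lp.hasSum_sq (y - z)).tsum_eq, ← (lp.hasSum_sq (y - z)).summable.sum_add_tsum_nat_add N,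
    Fin.sum_univ_eq_sum_range (fun i => (y i - z i) ^ 2), ← tsum_mul_left,
    ← tsum_mul_left, ← hy.tsum_add hz]
  refine add_le_add (le_of_eq (by simp)) (hyz.tsum_le_tsum (fun j => ?_) (hy.add hz))
  simp only [lp.coeFn_sub, Pi.sub_apply]
  nlinarith [sq_nonneg (y (j + N) + z (j + N))]

def headTailCylinder (N : ℕ) (A : Set (Fin N → ℝ)) (t : ℝ) (m : ℕ) : Set ℓ²(ℕ, ℝ) :=
  {x | (fun i : Fin N => x i) ∈ A ∧ ∑ j ∈ Finset.range m, x (j + N) ^ 2 ≤ t}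

lemma antitone_headTailCylinder (N : ℕ) (A : Set (Fin N → ℝ)) (t : ℝ) :
    Antitone (headTailCylinder N A t) := fun _ _ hmm' _ hx =>
  ⟨hx.1, (Finset.sum_le_sum_of_subset_of_nonneg (Finset.range_subset_range.2 hmm')
    fun _ _ _ => sq_nonneg _).trans hx.2⟩

lemma measurableSet_headTailCylinder {N : ℕ} {A : Set (Fin N → ℝ)} (hA : MeasurableSet A)
    (t : ℝ) (m : ℕ) : MeasurableSet (headTailCylinder N A t m) := by
  have hcoe : Measurable fun x : ℓ²(ℕ, ℝ) => (x : ℕ → ℝ) :=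
    lp.uniformContinuous_coe.continuous.measurable
  have hcyl : MeasurableSet
      {f : ℕ → ℝ | (fun i : Fin N => f i) ∈ A ∧ ∑ j ∈ Finset.range m, f (j + N) ^ 2 ≤ t} := by
    measurability
  exact hcoe hcyl

lemma measure_iInter_headTailCylinder (μ : Measure ℓ²(ℕ, ℝ)) [IsFiniteMeasure μ] {N : ℕ}
    {A : Set (Fin N → ℝ)} (hA : MeasurableSet A) (t : ℝ) :
    μ (⋂ m, headTailCylinder N A t m) = ⨅ m, μ (headTailCylinder N A t m) :=
  (antitone_headTailCylinder N A t).measure_iInter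
    (fun m => (measurableSet_headTailCylinder hA t m).nullMeasurableSet) ⟨0, measure_ne_top _ _⟩

lemma norm_sub_sq_lt_of_mem_iInter_headTailCylinder {z : ℓ²(ℕ, ℝ)} {N : ℕ} {s t : ℝ}
    (hz : ∑' j, z (j + N) ^ 2 ≤ t) {x : ℓ²(ℕ, ℝ)}
    (hx : x ∈ ⋂ m, headTailCylinder N {u | ∑ i, (u i - z i) ^ 2 < s} t m) :
    ‖x - z‖ ^ 2 < s + 4 * t := by
  have hxm := Set.mem_iInter.1 hx
  have hhead : ∑ i : Fin N, (x i - z i) ^ 2 < s := (hxm 0).1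
  have htail : ∑' j, x (j + N) ^ 2 ≤ t :=
    Real.tsum_le_of_sum_range_le (fun _ => sq_nonneg _) fun m => (hxm m).2
  linarith [lp.norm_sub_sq_le_head_add_tails x z N]

lemma IsGaussianProduct.measure_headTailCylinder {a : ℕ → ℝ} {r : ℝ} {μ : Measure ℓ²(ℕ, ℝ)}
    (hμ : IsGaussianProduct a r μ) {N : ℕ} {A : Set (Fin N → ℝ)} (hA : MeasurableSet A)
    (t : ℝ) (m : ℕ) :
    μ (headTailCylinder N A t m)
      = Measure.pi (fun i : Fin N => gaussianReal 0 (Real.toNNReal ((r * a i) ^ 2))) A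
        * Measure.pi (fun j : Fin m => gaussianReal 0 (Real.toNNReal ((r * a (j + N)) ^ 2)))
            {w | ∑ j, w j ^ 2 ≤ t} := by
  let B : Set (Fin m → ℝ) := {w | ∑ j, w j ^ 2 ≤ t}
  let C : Set (Fin (N + m) → ℝ) :=
    {w | (fun i => w (Fin.castAdd m i)) ∈ A ∧ (fun j => w (Fin.natAdd N j)) ∈ B}
  have hC : MeasurableSet C := by measurability
  have hcyl : headTailCylinder N A t m = {x | (fun i : Fin (N + m) => x i) ∈ C} := by
    ext x
    simp [headTailCylinder, C, B, Fin.sum_univ_eq_sum_range (fun j => x (N + j) ^ 2), add_comm]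
  rw [hcyl, hμ _ C hC, Measure.pi_castAdd_natAdd]
  simp_rw [Fin.val_castAdd, Fin.val_natAdd, add_comm N]
  rfl

lemma IsGaussianProduct.half_mul_le_measure_headTailCylinder {a : ℕ → ℝ} {r : ℝ}
    {μ : Measure ℓ²(ℕ, ℝ)} (hμ : IsGaussianProduct a r μ) (hvar : Summable fun i => (r * a i) ^ 2)
    {N : ℕ} {A : Set (Fin N → ℝ)} (hA : MeasurableSet A) {t : ℝ} (ht : 0 < t)
    (hN : 2 * ∑' j, (r * a (j + N)) ^ 2 ≤ t) (m : ℕ) :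
    Measure.pi (fun i : Fin N => gaussianReal 0 (Real.toNNReal ((r * a i) ^ 2))) A * 2⁻¹
      ≤ μ (headTailCylinder N A t m) := by
  rw [hμ.measure_headTailCylinder hA]
  gcongr
  refine half_le_pi_gaussianReal_sum_sq_le _ ht ?_
  calc 2 * ∑ j : Fin m, (Real.toNNReal ((r * a (j + N)) ^ 2) : ℝ)
      = 2 * ∑ j ∈ Finset.range m, (r * a (j + N)) ^ 2 := by
        simp only [Real.coe_toNNReal _ (sq_nonneg _),
          Fin.sum_univ_eq_sum_range (fun j => (r * a (j + N)) ^ 2)]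
    _ ≤ 2 * ∑' j, (r * a (j + N)) ^ 2 := by
        gcongr
        exact ((summable_nat_add_iff N).2 hvar).sum_le_tsum _ fun j _ => sq_nonneg _
    _ ≤ t := hN

/-- The Gaussian product measure `P_r` on `ℓ²` is strictly positive: every non-empty
open subset of `ℓ²` has positive measure. -/
theorem gaussianProduct_pos_of_open
    (a : ℕ → ℝ) (ha : ∀ i, 0 < a i) (hasum : Summable a) (r : ℝ) (hr : 0 < r)
    (μ : Measure (lp (fun _ : ℕ => ℝ) 2)) [IsProbabilityMeasure μ]
    (hμ : IsGaussianProduct a r μ) :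
    ∀ O : Set (lp (fun _ : ℕ => ℝ) 2), IsOpen O → O.Nonempty → 0 < μ O := by
  rintro O hO ⟨z, hz⟩
  obtain ⟨ε, hε, hball⟩ := Metric.isOpen_iff.mp hO z hz
  have ht : 0 < ε ^ 2 / 8 := by positivity
  have hvar : Summable fun i => (r * a i) ^ 2 := (hasum.mul_left r).sq
  obtain ⟨N, hzN, hvarN⟩ :
      ∃ N, ∑' j, z (j + N) ^ 2 ≤ ε ^ 2 / 8 ∧ 2 * ∑' j, (r * a (j + N)) ^ 2 ≤ ε ^ 2 / 8 :=
    (((tendsto_sum_nat_add fun i => z i ^ 2).eventually (ge_mem_nhds ht)).and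
      (((tendsto_sum_nat_add fun i => (r * a i) ^ 2).const_mul 2).eventually
        (ge_mem_nhds (by simpa using ht)))).exists
  set A : Set (Fin N → ℝ) := {u | ∑ i, (u i - z i) ^ 2 < ε ^ 2 / 2}
  have hA : IsOpen A := isOpen_lt (by fun_prop) continuous_const
  have hApos :
      0 < Measure.pi (fun i : Fin N => gaussianReal 0 (Real.toNNReal ((r * a i) ^ 2))) A := by
    have := isOpenPosMeasure_pi_gaussianReal (fun _ : Fin N => (0 : ℝ))
      (v := fun i => Real.toNNReal ((r * a i) ^ 2))
      fun i => (Real.toNNReal_pos.2 (pow_pos (mul_pos hr (ha i)) 2)).ne'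
    exact hA.measure_pos _ ⟨fun i => z i, by simpa [A] using pow_pos hε 2⟩
  have hsub : ⋂ m, headTailCylinder N A (ε ^ 2 / 8) m ⊆ O := fun x hx =>
    hball <| mem_ball_iff_norm.2 <| lt_of_pow_lt_pow_left₀ 2 hε.le <| by
      linarith [norm_sub_sq_lt_of_mem_iInter_headTailCylinder hzN hx]
  calc 0 < _ * 2⁻¹ := ENNReal.mul_pos hApos.ne' (by norm_num)
    _ ≤ ⨅ m, μ (headTailCylinder N A (ε ^ 2 / 8) m) :=
      le_iInf (hμ.half_mul_le_measure_headTailCylinder hvar hA.measurableSet ht hvarN)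
    _ = μ (⋂ m, headTailCylinder N A (ε ^ 2 / 8) m) :=
      (measure_iInter_headTailCylinder μ hA.measurableSet _).symm
    _ ≤ μ O := measure_mono hsub
end

section
/- Let P_r be the Gaussian product measure on ℓ² with component variances r²a_i², and set A = sup_k a_k. Then ∫_{ℓ²} exp(c ||x||²_{ℓ²}) dP_r(x) < ∞ for every 0 < c < 1/(2r²A²), and ∫_{ℓ²} exp(c ||x||²_{ℓ²}) dP_r(x) = ∞ for every c ≥ 1/(2r²A²). Moreover ∫_{ℓ²} exp(c ||x||^{2+δ}_{ℓ²}) dP_r(x) = ∞ for all c, δ > 0. -/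
open MeasureTheory ProbabilityTheory

/-! Under `μ` the coordinates `x i` are independent centred Gaussians of variance
`vᵢ = r²aᵢ²`, and `‖x‖² = ∑ xᵢ²`. By monotone convergence and independence,
`∫ exp (c‖x‖²) dμ = ∏ᵢ (1 - 2cvᵢ)^(-1/2) ≤ exp (∑ᵢ 2cvᵢ / (1 - 2c sup v))`, which is finite
when `2c sup v < 1` because `∑ vᵢ < ∞`. Conversely `‖x‖ ≥ |x k|`; since `aᵢ → 0`
the supremum of the `aᵢ` is attained at some `k`, and a single coordinate already makes the
integral infinite as soon as the integrand beats the Gaussian density `exp (-t²/(2vₖ))` at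
infinity: this happens for `exp (c t²)` when `2cvₖ ≥ 1`, and for `exp (c|t|^(2+δ))` always. -/

open Real Filter Set Topology
open scoped NNReal ENNReal

theorem lintegral_fintype_prod_eq_prod {ι : Type*} [Fintype ι] {ν : ι → Measure ℝ}
    [∀ i, IsProbabilityMeasure (ν i)] {f : ι → ℝ → ℝ≥0∞} (hf : ∀ i, Measurable (f i)) :
    ∫⁻ y, ∏ i, f i (y i) ∂Measure.pi ν = ∏ i, ∫⁻ t, f i t ∂ν i := by
  have hindep : iIndepFun (fun i (y : ι → ℝ) => f i (y i)) (Measure.pi ν) :=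
    iIndepFun_pi fun i => (hf i).aemeasurable
  exact (lintegral_prod_eq_prod_lintegral_of_indepFun _ _ hindep
    fun i => (hf i).comp (measurable_pi_apply i)).trans <|
      Finset.prod_congr rfl fun i _ => (measurePreserving_eval ν i).lintegral_comp (hf i)

theorem lintegral_exp_mul_sq_gaussianReal {v : ℝ≥0} {c : ℝ} (hc : 2 * c * v < 1) :
    ∫⁻ t, ENNReal.ofReal (exp (c * t ^ 2)) ∂gaussianReal 0 v
      = ENNReal.ofReal √((1 - 2 * c * v)⁻¹) := by
  rcases eq_or_ne v 0 with rfl | hv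
  · simp [gaussianReal_zero_var]
  set b := (1 - 2 * c * v) / (2 * v) with hb_def
  have hb : 0 < b := div_pos (by linarith) (by positivity)
  have hdensity (t : ℝ) : gaussianPDFReal 0 v t * exp (c * t ^ 2)
      = (√(2 * π * v))⁻¹ * exp (-b * t ^ 2) := by
    rw [gaussianPDFReal, mul_assoc, ← exp_add, hb_def]
    congr 2
    field_simp
    ring
  rw [gaussianReal_of_var_ne_zero _ hv, lintegral_withDensity_eq_lintegral_mul _
    (measurable_gaussianPDF _ _) (by fun_prop)]
  simp only [Pi.mul_apply, gaussianPDF, ← ENNReal.ofReal_mul (gaussianPDFReal_nonneg _ _ _),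
    hdensity]
  rw [← ofReal_integral_eq_lintegral_ofReal ((integrable_exp_neg_mul_sq hb).const_mul _)
    (ae_of_all _ fun t => by positivity), integral_const_mul, integral_gaussian]
  congr 1
  rw [← sqrt_inv, ← sqrt_mul (by positivity), hb_def]
  congr 1
  field_simp

theorem sqrt_inv_one_sub_le_exp {w : ℝ} (h0 : 0 ≤ w) (h1 : w < 1) :
    √((1 - w)⁻¹) ≤ exp (w / (1 - w)) := by
  have hw : 0 < 1 - w := by linarith
  have hge : 1 ≤ (1 - w)⁻¹ := one_le_inv₀ hw |>.2 (by linarith)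
  calc √((1 - w)⁻¹) ≤ (1 - w)⁻¹ := sqrt_le_self_iff.2 (Or.inr hge)
    _ = w / (1 - w) + 1 := by field_simp; ring
    _ ≤ exp (w / (1 - w)) := add_one_le_exp _

theorem lintegral_exp_gaussianReal_eq_top_of_eventually_le {m : ℝ} {v : ℝ≥0} (hv : v ≠ 0)
    {g : ℝ → ℝ} (hg : Measurable g) (hgrowth : ∀ᶠ t in atTop, (t - m) ^ 2 / (2 * v) ≤ g t) :
    ∫⁻ t, ENNReal.ofReal (exp (g t)) ∂gaussianReal m v = ⊤ := by
  obtain ⟨M, hM⟩ := eventually_atTop.1 hgrowth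
  set K := (√(2 * π * v))⁻¹
  have hK : 0 < K := by positivity
  have hlower : (Ici M).indicator (fun _ => ENNReal.ofReal K)
      ≤ gaussianPDF m v * fun t => ENNReal.ofReal (exp (g t)) := by
    intro t
    refine indicator_apply_le' (fun ht => ?_) fun _ => zero_le
    rw [Pi.mul_apply, gaussianPDF, ← ENNReal.ofReal_mul (gaussianPDFReal_nonneg _ _ _),
      gaussianPDFReal, mul_assoc, ← exp_add]
    refine ENNReal.ofReal_le_ofReal (le_mul_of_one_le_right hK.le (one_le_exp ?_))
    have := hM t ht
    rw [neg_div]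
    linarith
  rw [gaussianReal_of_var_ne_zero _ hv, lintegral_withDensity_eq_lintegral_mul _
    (measurable_gaussianPDF _ _) hg.exp.ennreal_ofReal]
  refine eq_top_mono (lintegral_mono hlower) ?_
  rw [lintegral_indicator_const measurableSet_Ici, Real.volume_Ici,
    ENNReal.mul_top (ENNReal.ofReal_pos.2 hK).ne']

theorem lintegral_exp_mul_sq_gaussianReal_eq_top {v : ℝ≥0} (hv : v ≠ 0) {c : ℝ}
    (hc : (2 * v : ℝ)⁻¹ ≤ c) : ∫⁻ t, ENNReal.ofReal (exp (c * t ^ 2)) ∂gaussianReal 0 v = ⊤ := by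
  refine lintegral_exp_gaussianReal_eq_top_of_eventually_le hv (by fun_prop)
    (Eventually.of_forall fun t => ?_)
  rw [sub_zero, div_eq_inv_mul]
  exact mul_le_mul_of_nonneg_right hc (sq_nonneg t)

theorem lintegral_exp_mul_abs_rpow_gaussianReal_eq_top {v : ℝ≥0} (hv : v ≠ 0) {c p : ℝ}
    (hc : 0 < c) (hp : 2 < p) :
    ∫⁻ t, ENNReal.ofReal (exp (c * |t| ^ p)) ∂gaussianReal 0 v = ⊤ := by
  refine lintegral_exp_gaussianReal_eq_top_of_eventually_le hv (by fun_prop) ?_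
  filter_upwards [(tendsto_rpow_atTop (by linarith : 0 < p - 2)).eventually_ge_atTop
    (2 * v * c)⁻¹, eventually_gt_atTop 0] with t ht ht0
  have hsplit : |t| ^ p = t ^ 2 * t ^ (p - 2) := by
    rw [abs_of_pos ht0, ← rpow_two, ← rpow_add ht0]
    ring_nf
  calc (t - 0) ^ 2 / (2 * v) = c * (t ^ 2 * (2 * v * c)⁻¹) := by rw [sub_zero]; field_simp
    _ ≤ c * |t| ^ p := by rw [hsplit]; gcongr

theorem summable_sq_of_nonneg {a : ℕ → ℝ} (ha : ∀ i, 0 ≤ a i) (hasum : Summable a) :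
    Summable fun i => a i ^ 2 := by
  simpa only [sq, Function.comp_def] using (hasum.mul_of_nonneg hasum ha ha).comp_injective
    (i := fun i => (i, i)) fun _ _ h => congrArg Prod.fst h

theorem exists_forall_le_of_tendsto_zero {a : ℕ → ℝ} (ha : Tendsto a atTop (𝓝 0)) {k₀ : ℕ}
    (hk₀ : 0 < a k₀) : ∃ k, ∀ i, a i ≤ a k :=
  continuous_of_discreteTopology.exists_forall_ge' k₀ <| by
    rw [cocompact_eq_cofinite, Nat.cofinite_eq_atTop]
    exact ha.eventually (ge_mem_nhds hk₀)

local notation "ℓ²" => lp (fun _ : ℕ => ℝ) 2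

@[fun_prop]
theorem measurable_lp_apply (i : ℕ) : Measurable fun x : ℓ² => x i :=
  (lp.evalCLM ℝ (fun _ : ℕ => ℝ) 2 i).continuous.measurable

theorem hasSum_sq_lp_two (x : ℓ²) : HasSum (fun i => x i ^ 2) (‖x‖ ^ 2) := by
  have h := lp.hasSum_norm (p := 2) (by norm_num) x
  simp only [ENNReal.toReal_ofNat, rpow_two, Real.norm_eq_abs, sq_abs] at h
  exact h

theorem measurable_lp_restrict (n : ℕ) : Measurable fun (x : ℓ²) (i : Fin n) => x i :=
  measurable_pi_iff.2 fun i => measurable_lp_apply i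

theorem abs_apply_le_norm_lp_two (x : ℓ²) (i : ℕ) : |x i| ≤ ‖x‖ :=
  lp.norm_apply_le_norm two_ne_zero x i

namespace IsGaussianProduct

variable {a : ℕ → ℝ} {r : ℝ} {μ : Measure ℓ²}

theorem map_restrict (hμ : IsGaussianProduct a r μ) (n : ℕ) :
    μ.map (fun (x : ℓ²) (i : Fin n) => x i)
      = Measure.pi fun i : Fin n => gaussianReal 0 (toNNReal ((r * a i) ^ 2)) := by
  ext F hF
  rw [Measure.map_apply (measurable_lp_restrict _) hF]
  exact hμ n F hF

theorem map_coord (hμ : IsGaussianProduct a r μ) (k : ℕ) :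
    μ.map (fun x : ℓ² => x k) = gaussianReal 0 (toNNReal ((r * a k) ^ 2)) := by
  have hcomp : (fun x : ℓ² => x k)
      = Function.eval (Fin.last k) ∘ fun (x : ℓ²) (i : Fin (k + 1)) => x i := rfl
  rw [hcomp, ← Measure.map_map (measurable_pi_apply (Fin.last k))
    (measurable_lp_restrict _), hμ.map_restrict,
    (measurePreserving_eval _ _).map_eq, Fin.val_last]

theorem lintegral_prod_apply (hμ : IsGaussianProduct a r μ) (n : ℕ) {f : ℝ → ℝ≥0∞}
    (hf : Measurable f) :
    ∫⁻ x, ∏ i : Fin n, f (x i) ∂μ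
      = ∏ i : Fin n, ∫⁻ t, f t ∂gaussianReal 0 (toNNReal ((r * a i) ^ 2)) := by
  rw [← lintegral_fintype_prod_eq_prod fun _ => hf, ← hμ.map_restrict,
    lintegral_map (by fun_prop) (measurable_lp_restrict _)]

theorem lintegral_exp_mul_norm_sq_eq_iSup (hμ : IsGaussianProduct a r μ) {c : ℝ} (hc : 0 ≤ c) :
    ∫⁻ x, ENNReal.ofReal (exp (c * ‖x‖ ^ 2)) ∂μ
      = ⨆ n, ∏ i : Fin n,
          ∫⁻ t, ENNReal.ofReal (exp (c * t ^ 2)) ∂gaussianReal 0 (toNNReal ((r * a i) ^ 2)) := by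
  set F : ℕ → ℓ² → ℝ≥0∞ := fun n x => ENNReal.ofReal (exp (c * ∑ i ∈ Finset.range n, x i ^ 2))
  have hF_mono : Monotone F := fun m n hmn x =>
    ENNReal.ofReal_le_ofReal <| exp_le_exp.2 <| mul_le_mul_of_nonneg_left
      (Finset.sum_le_sum_of_subset_of_nonneg (Finset.range_mono hmn) fun _ _ _ => sq_nonneg _) hc
  have hF_sup (x : ℓ²) : ⨆ n, F n x = ENNReal.ofReal (exp (c * ‖x‖ ^ 2)) := by
    have hcont : Continuous fun s : ℝ => ENNReal.ofReal (exp (c * s)) :=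
      ENNReal.continuous_ofReal.comp (by fun_prop)
    exact tendsto_nhds_unique (tendsto_atTop_iSup fun _ _ h => hF_mono h x) <|
      (hcont.tendsto _).comp (hasSum_sq_lp_two x).tendsto_sum_nat
  have hF_lintegral (n : ℕ) : ∫⁻ x, F n x ∂μ
      = ∏ i : Fin n,
          ∫⁻ t, ENNReal.ofReal (exp (c * t ^ 2)) ∂gaussianReal 0 (toNNReal ((r * a i) ^ 2)) := by
    simp only [F, ← Fin.sum_univ_eq_sum_range (fun i => _ ^ 2), Finset.mul_sum, exp_sum,
      ENNReal.ofReal_prod_of_nonneg fun _ _ => (exp_pos _).le]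
    exact hμ.lintegral_prod_apply n (f := fun t => ENNReal.ofReal (exp (c * t ^ 2))) (by fun_prop)
  simp_rw [← hF_sup, ← hF_lintegral]
  exact lintegral_iSup (fun n => by fun_prop) hF_mono

theorem lintegral_exp_mul_norm_sq_ne_top (hμ : IsGaussianProduct a r μ) {c V : ℝ} (hc : 0 ≤ c)
    (hV : ∀ i, (r * a i) ^ 2 ≤ V) (hcV : c < (2 * V)⁻¹) (hsum : Summable fun i => (r * a i) ^ 2) :
    ∫⁻ x, ENNReal.ofReal (exp (c * ‖x‖ ^ 2)) ∂μ ≠ ⊤ := by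
  have hV_pos : 0 < 2 * V := inv_pos.1 (hc.trans_lt hcV)
  have hcV' : 2 * c * V < 1 := by
    have := (lt_inv_mul_iff₀ hV_pos).1 (by rwa [mul_one])
    linarith
  set u : ℕ → ℝ := fun i => 2 * c * (r * a i) ^ 2 / (1 - 2 * c * V)
  have hu_nonneg (i : ℕ) : 0 ≤ u i := div_nonneg (by positivity) (by linarith)
  have hu_sum : Summable u := (hsum.mul_left (2 * c)).div_const _
  have hfactor (i : ℕ) :
      ∫⁻ t, ENNReal.ofReal (exp (c * t ^ 2)) ∂gaussianReal 0 (toNNReal ((r * a i) ^ 2))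
        ≤ ENNReal.ofReal (exp (u i)) := by
    have hw : 0 ≤ 2 * c * (r * a i) ^ 2 := by positivity
    have hwV : 2 * c * (r * a i) ^ 2 ≤ 2 * c * V := mul_le_mul_of_nonneg_left (hV i) (by positivity)
    rw [lintegral_exp_mul_sq_gaussianReal, coe_toNNReal _ (sq_nonneg _)]
    · exact ENNReal.ofReal_le_ofReal <| (sqrt_inv_one_sub_le_exp hw (by linarith)).trans <|
        exp_le_exp.2 <| div_le_div_of_nonneg_left hw (by linarith) (by linarith)
    · rw [coe_toNNReal _ (sq_nonneg _)]
      linarith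
  rw [hμ.lintegral_exp_mul_norm_sq_eq_iSup hc]
  refine ne_top_of_le_ne_top (ENNReal.ofReal_ne_top (r := exp (∑' i, u i))) (iSup_le fun n => ?_)
  calc _ ≤ ∏ i : Fin n, ENNReal.ofReal (exp (u i)) := Finset.prod_le_prod' fun i _ => hfactor i
    _ = ENNReal.ofReal (exp (∑ i ∈ Finset.range n, u i)) := by
      rw [← Fin.sum_univ_eq_sum_range, exp_sum,
        ENNReal.ofReal_prod_of_nonneg fun _ _ => (exp_pos _).le]
    _ ≤ ENNReal.ofReal (exp (∑' i, u i)) :=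
      ENNReal.ofReal_le_ofReal <| exp_le_exp.2 <| hu_sum.sum_le_tsum _ fun i _ => hu_nonneg i

theorem lintegral_exp_norm_eq_top (hμ : IsGaussianProduct a r μ) (k : ℕ) {h : ℝ → ℝ}
    (hh : MonotoneOn h (Ici 0))
    (htop : ∫⁻ t, ENNReal.ofReal (exp (h |t|)) ∂gaussianReal 0 (toNNReal ((r * a k) ^ 2)) = ⊤) :
    ∫⁻ x, ENNReal.ofReal (exp (h ‖x‖)) ∂μ = ⊤ := by
  rw [← hμ.map_coord] at htop
  refine top_le_iff.1 ((htop ▸ lintegral_map_le _ _).trans (lintegral_mono fun x => ?_))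
  exact ENNReal.ofReal_le_ofReal <| exp_le_exp.2 <|
    hh (mem_Ici.2 (abs_nonneg _)) (mem_Ici.2 (norm_nonneg _)) (abs_apply_le_norm_lp_two x k)

end IsGaussianProduct

theorem gaussianProduct_exp_norm_sq_integral_general
    (a : ℕ → ℝ) (ha : ∀ i, 0 < a i) (hasum : Summable a) (r : ℝ) (hr : 0 < r)
    (μ : Measure (lp (fun _ : ℕ => ℝ) 2))
    (hμ : IsGaussianProduct a r μ) :
    (∀ c : ℝ, 0 < c → c < 1 / (2 * r ^ 2 * (⨆ k, a k) ^ 2) →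
      (∫⁻ x, ENNReal.ofReal (Real.exp (c * ‖x‖ ^ 2)) ∂μ) ≠ ⊤) ∧
    (∀ c : ℝ, 1 / (2 * r ^ 2 * (⨆ k, a k) ^ 2) ≤ c →
      (∫⁻ x, ENNReal.ofReal (Real.exp (c * ‖x‖ ^ 2)) ∂μ) = ⊤) ∧
    (∀ c δ : ℝ, 0 < c → 0 < δ →
      (∫⁻ x, ENNReal.ofReal (Real.exp (c * ‖x‖ ^ (2 + δ))) ∂μ) = ⊤) := by
  obtain ⟨k, hk⟩ := exists_forall_le_of_tendsto_zero hasum.tendsto_atTop_zero (ha 0)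
  have hA : ⨆ i, a i = a k := le_antisymm (ciSup_le hk) (le_ciSup ⟨a k, forall_mem_range.2 hk⟩ k)
  have hthreshold : 1 / (2 * r ^ 2 * (⨆ i, a i) ^ 2) = (2 * (r * a k) ^ 2)⁻¹ := by
    rw [hA]
    ring
  have hvar (i : ℕ) : toNNReal ((r * a i) ^ 2) ≠ 0 := by
    simpa using mul_ne_zero hr.ne' (ha i).ne'
  rw [hthreshold]
  refine ⟨fun c hc hck => ?_, fun c hck => ?_, fun c δ hc hδ => ?_⟩
  · have hsum : Summable fun i => (r * a i) ^ 2 := by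
      simpa only [mul_pow] using (summable_sq_of_nonneg (fun i => (ha i).le) hasum).mul_left (r ^ 2)
    exact hμ.lintegral_exp_mul_norm_sq_ne_top hc.le (fun i => pow_le_pow_left₀
      (mul_nonneg hr.le (ha i).le) (mul_le_mul_of_nonneg_left (hk i) hr.le) 2) hck hsum
  · have hc : 0 < c := (inv_pos.2 (by positivity [ha k])).trans_le hck
    refine hμ.lintegral_exp_norm_eq_top k (h := fun s => c * s ^ 2)
      (fun s hs t _ hst => mul_le_mul_of_nonneg_left (pow_le_pow_left₀ hs hst 2) hc.le) ?_
    simp only [sq_abs]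
    exact lintegral_exp_mul_sq_gaussianReal_eq_top (hvar k) (by rwa [coe_toNNReal _ (sq_nonneg _)])
  · exact hμ.lintegral_exp_norm_eq_top 0 (h := fun s => c * s ^ (2 + δ))
      (fun s hs t _ hst => mul_le_mul_of_nonneg_left (rpow_le_rpow hs hst (by positivity)) hc.le)
      (lintegral_exp_mul_abs_rpow_gaussianReal_eq_top (hvar 0) hc (by linarith))

/-- Fernique-type dichotomy for the Gaussian product measure `P_r` on `ℓ²` with
`A = sup_k a_k`: the integral `∫ exp(c‖x‖²) dP_r` is finite for `0 < c < 1/(2r²A²)` and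
infinite for `c ≥ 1/(2r²A²)`; moreover `∫ exp(c‖x‖^{2+δ}) dP_r = ∞` for all `c, δ > 0`. -/
theorem gaussianProduct_exp_norm_sq_integral
    (a : ℕ → ℝ) (ha : ∀ i, 0 < a i) (hasum : Summable a) (r : ℝ) (hr : 0 < r)
    (μ : Measure (lp (fun _ : ℕ => ℝ) 2)) [IsProbabilityMeasure μ]
    (hμ : IsGaussianProduct a r μ) :
    (∀ c : ℝ, 0 < c → c < 1 / (2 * r ^ 2 * (⨆ k, a k) ^ 2) →
      (∫⁻ x, ENNReal.ofReal (Real.exp (c * ‖x‖ ^ 2)) ∂μ) ≠ ⊤) ∧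
    (∀ c : ℝ, 1 / (2 * r ^ 2 * (⨆ k, a k) ^ 2) ≤ c →
      (∫⁻ x, ENNReal.ofReal (Real.exp (c * ‖x‖ ^ 2)) ∂μ) = ⊤) ∧
    (∀ c δ : ℝ, 0 < c → 0 < δ →
      (∫⁻ x, ENNReal.ofReal (Real.exp (c * ‖x‖ ^ (2 + δ))) ∂μ) = ⊤) :=
  gaussianProduct_exp_norm_sq_integral_general a ha hasum r hr μ hμ
end

section
/- For 0 < p < q < ∞, the topologies on ℝ^ℕ induced by the metrics d_p form a strictly increasing chain: T (product topology) ⊊ T_∞ ⊊ T_q ⊊ T_p, where T_p is the topology induced by d_p((x_i),(y_i)) = min{1, (Σ|x_i−y_i|^p)^{1/max{1,p}}} and T_∞ by min{1, sup_i |x_i−y_i|}. -/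
/-!
Each topology here is generated by the balls of a quasi-pseudometric, so its neighbourhood filters
have the balls as a basis, and `topOf d' ≤ topOf d` as soon as `d ≤ d' ^ a` for some `a > 0`.
This holds for `d_∞ ≤ d_q ^ (max 1 q / q)` (a coordinate is bounded by the `ℓ^q` sum) and for
`d_q ≤ d_p ^ (max 1 p / max 1 q)` (on the unit ball of `ℓ^p` every `|vᵢ| ≤ 1`, so
`|vᵢ|^q ≤ |vᵢ|^p`); coordinates are continuous for `d_∞`. Strictness comes from points that are
arbitrarily close in the coarser topology but at distance `1` in the finer one: the indicators of
`[n, ∞)` for the product topology against `d_∞`, small constant sequences for `d_∞` against `d_q`,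
and `(c / (i + 1)) ^ (1 / p)` for small `c > 0`, which lies in `ℓ^q` but not in `ℓ^p`, for `d_q`
against `d_p`.
-/

open Topology
open scoped Classical

/-- The metric `d_p` on `ℝ^ℕ`, `d_p(x,y) = min{1, (Σᵢ|xᵢ-yᵢ|^p)^{1/max{1,p}}}`
(with value `1` when the sum diverges). -/

noncomputable def dP (p : ℝ) (x y : ℕ → ℝ) : ℝ :=
  if Summable (fun i => |x i - y i| ^ p) then
    min 1 ((∑' i, |x i - y i| ^ p) ^ (1 / max 1 p)) else 1

/-- The metric `d_∞` on `ℝ^ℕ`, `d_∞(x,y) = min{1, supᵢ |xᵢ-yᵢ|}` (with value `1` when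
the supremum is infinite). -/

noncomputable def dInf (x y : ℕ → ℝ) : ℝ :=
  if BddAbove (Set.range fun i => |x i - y i|) then min 1 (⨆ i, |x i - y i|) else 1

/-- The topology on `ℝ^ℕ` generated by the open balls of a distance function `d`. -/
def topOf (d : (ℕ → ℝ) → (ℕ → ℝ) → ℝ) : TopologicalSpace (ℕ → ℝ) :=
  TopologicalSpace.generateFrom {U | ∃ x r, 0 < r ∧ U = {y | d x y < r}}

open Filter

structure IsQuasiPseudometric {X : Type*} (d : X → X → ℝ) : Prop where
  dist_self : ∀ x, d x x = 0
  dist_triangle : ∀ x y z, d x z ≤ d x y + d y z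

namespace IsQuasiPseudometric

variable {d d' : (ℕ → ℝ) → (ℕ → ℝ) → ℝ}

theorem hasBasis_nhds (hd : IsQuasiPseudometric d) (x : ℕ → ℝ) :
    (@nhds _ (topOf d) x).HasBasis (fun ε : ℝ => 0 < ε) fun ε => {y | d x y < ε} := by
  have hnhds : @nhds _ (topOf d) x = ⨅ ε ∈ Set.Ioi 0, 𝓟 {y | d x y < ε} := by
    rw [topOf, TopologicalSpace.nhds_generateFrom]
    refine le_antisymm (le_iInf₂ fun ε hε => ?_) ?_
    · exact iInf₂_le _ ⟨by simpa [hd.dist_self] using hε, x, ε, hε, rfl⟩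
    · refine le_iInf₂ fun s ⟨hxs, c, r, hr, hs⟩ => ?_
      subst hs
      refine iInf₂_le_of_le (r - d c x) (Set.mem_Ioi.2 (sub_pos.2 hxs))
        (principal_mono.2 fun y hy => ?_)
      have := hd.dist_triangle c x y
      simp only [Set.mem_ofPred_eq] at hy ⊢
      linarith
  rw [hnhds]
  refine hasBasis_biInf_principal
    (fun ε hε δ hδ => ⟨min ε δ, lt_min (α := ℝ) hε hδ, ?_, ?_⟩) ⟨1, zero_lt_one (α := ℝ)⟩
  · exact fun y (hy : d x y < min ε δ) => show d x y < ε from hy.trans_le (min_le_left _ _)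
  · exact fun y (hy : d x y < min ε δ) => show d x y < δ from hy.trans_le (min_le_right _ _)

theorem topOf_le_topOf_iff (hd : IsQuasiPseudometric d) (hd' : IsQuasiPseudometric d') :
    topOf d' ≤ topOf d ↔ ∀ x, ∀ ε > 0, ∃ δ > 0, ∀ z, d' x z < δ → d x z < ε := by
  rw [le_iff_nhds]
  exact forall_congr' fun x => ((hd'.hasBasis_nhds x).le_basis_iff (hd.hasBasis_nhds x)).trans <|
    by simp only [Set.ofPred_subset_ofPred]

theorem topOf_le_topOf_of_le_rpow (hd : IsQuasiPseudometric d) (hd' : IsQuasiPseudometric d')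
    {a : ℝ} (ha : 0 < a) (hnonneg : ∀ x z, 0 ≤ d' x z) (hle : ∀ x z, d x z ≤ d' x z ^ a) :
    topOf d' ≤ topOf d := by
  refine (topOf_le_topOf_iff hd hd').2 fun x ε hε => ⟨ε ^ a⁻¹, by positivity, fun z hz => ?_⟩
  calc d x z ≤ d' x z ^ a := hle x z
    _ < (ε ^ a⁻¹) ^ a := Real.rpow_lt_rpow (hnonneg x z) hz ha
    _ = ε := Real.rpow_inv_rpow hε.le ha.ne'

theorem not_topOf_le_topOf (hd : IsQuasiPseudometric d) (hd' : IsQuasiPseudometric d')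
    (x : ℕ → ℝ) (hfar : ∀ δ > 0, ∃ z, d x z < δ ∧ 1 ≤ d' x z) :
    ¬ topOf d ≤ topOf d' := by
  rw [topOf_le_topOf_iff hd' hd]
  intro h
  obtain ⟨δ, hδ, hball⟩ := h x 1 one_pos
  obtain ⟨z, hz, hz'⟩ := hfar δ hδ
  exact (hball z hz).not_ge hz'

end IsQuasiPseudometric

theorem setOf_isOpen_ssubset_iff {X : Type*} {t₁ t₂ : TopologicalSpace X} :
    {U | IsOpen[t₂] U} ⊂ {U | IsOpen[t₁] U} ↔ t₁ < t₂ := by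
  simp only [lt_iff_le_not_ge, TopologicalSpace.le_def, Set.ofPred_subset_ofPred]
  rfl

theorem min_one_add_le {a b : ℝ} (ha : 0 ≤ a) (hb : 0 ≤ b) :
    min 1 (a + b) ≤ min 1 a + min 1 b := by
  simp only [min_def]
  split_ifs <;> linarith

theorem dInf_le_one (x z : ℕ → ℝ) : dInf x z ≤ 1 := by
  unfold dInf
  split_ifs
  exacts [min_le_left _ _, le_rfl]

theorem min_one_abs_sub_le_dInf (x z : ℕ → ℝ) (i : ℕ) : min 1 |x i - z i| ≤ dInf x z := by
  unfold dInf
  split_ifs with hbdd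
  exacts [min_le_min_left 1 (le_ciSup hbdd i), min_le_left _ _]

theorem dInf_nonneg (x z : ℕ → ℝ) : 0 ≤ dInf x z :=
  (le_min zero_le_one (abs_nonneg _)).trans (min_one_abs_sub_le_dInf x z 0)

theorem dInf_le_min_one {x z : ℕ → ℝ} {c : ℝ} (h : ∀ i, |x i - z i| ≤ c) :
    dInf x z ≤ min 1 c := by
  have hbdd : BddAbove (Set.range fun i => |x i - z i|) := ⟨c, Set.forall_mem_range.2 h⟩
  rw [dInf, if_pos hbdd]
  exact min_le_min_left 1 (ciSup_le h)

theorem isQuasiPseudometric_dInf : IsQuasiPseudometric dInf where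
  dist_self x := le_antisymm ((dInf_le_min_one (c := 0) fun i => by simp).trans (min_le_right _ _))
    (dInf_nonneg x x)
  dist_triangle x y z := by
    by_cases hxy : BddAbove (Set.range fun i => |x i - y i|)
    swap
    · have h1 : dInf x y = 1 := if_neg hxy
      linarith [dInf_le_one x z, dInf_nonneg y z]
    by_cases hyz : BddAbove (Set.range fun i => |y i - z i|)
    swap
    · have h1 : dInf y z = 1 := if_neg hyz
      linarith [dInf_le_one x z, dInf_nonneg x y]
    have hle : ∀ i, |x i - z i| ≤ (⨆ i, |x i - y i|) + ⨆ i, |y i - z i| := fun i =>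
      (abs_sub_le _ _ _).trans (add_le_add (le_ciSup hxy i) (le_ciSup hyz i))
    calc dInf x z ≤ min 1 ((⨆ i, |x i - y i|) + ⨆ i, |y i - z i|) := dInf_le_min_one hle
      _ ≤ min 1 (⨆ i, |x i - y i|) + min 1 (⨆ i, |y i - z i|) :=
        min_one_add_le ((abs_nonneg _).trans (le_ciSup hxy 0))
          ((abs_nonneg _).trans (le_ciSup hyz 0))
      _ = dInf x y + dInf y z := by rw [dInf, dInf, if_pos hxy, if_pos hyz]

theorem summable_rpow_and_tsum_rpow_le {a b c : ℕ → ℝ} {p : ℝ} (hp : 0 < p)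
    (ha : ∀ i, 0 ≤ a i) (hb : ∀ i, 0 ≤ b i) (hc : ∀ i, 0 ≤ c i) (hcab : ∀ i, c i ≤ a i + b i)
    (hsa : Summable fun i => a i ^ p) (hsb : Summable fun i => b i ^ p) :
    (Summable fun i => c i ^ p) ∧ (∑' i, c i ^ p) ^ (1 / max 1 p) ≤
      (∑' i, a i ^ p) ^ (1 / max 1 p) + (∑' i, b i ^ p) ^ (1 / max 1 p) := by
  have hmono : ∀ i, c i ^ p ≤ (a i + b i) ^ p := fun i =>
    Real.rpow_le_rpow (hc i) (hcab i) hp.le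
  rcases le_total p 1 with hp1 | hp1
  · have hsub : ∀ i, c i ^ p ≤ a i ^ p + b i ^ p := fun i =>
      (hmono i).trans (Real.rpow_add_le_add_rpow (ha i) (hb i) hp.le hp1)
    have hsc : Summable fun i => c i ^ p :=
      (hsa.add hsb).of_nonneg_of_le (fun i => Real.rpow_nonneg (hc i) p) hsub
    refine ⟨hsc, ?_⟩
    simp only [max_eq_left hp1, div_one, Real.rpow_one]
    exact (hsc.tsum_le_tsum hsub (hsa.add hsb)).trans_eq (hsa.tsum_add hsb)
  · obtain ⟨hsab, hminkowski⟩ := Real.Lp_add_le_tsum_of_nonneg hp1 ha hb hsa hsb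
    have hsc : Summable fun i => c i ^ p :=
      hsab.of_nonneg_of_le (fun i => Real.rpow_nonneg (hc i) p) hmono
    refine ⟨hsc, ?_⟩
    rw [max_eq_right hp1]
    refine le_trans ?_ hminkowski
    exact Real.rpow_le_rpow (tsum_nonneg fun i => Real.rpow_nonneg (hc i) p)
      (hsc.tsum_le_tsum hmono hsab) (by positivity)

section dP

variable {p : ℝ}

theorem dP_le_one (p : ℝ) (x z : ℕ → ℝ) : dP p x z ≤ 1 := by
  unfold dP
  split_ifs
  exacts [min_le_left _ _, le_rfl]

theorem dP_nonneg (p : ℝ) (x z : ℕ → ℝ) : 0 ≤ dP p x z := by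
  unfold dP
  split_ifs
  exacts [le_min zero_le_one (by positivity), zero_le_one]

theorem dP_of_not_summable {x z : ℕ → ℝ} (h : ¬ Summable fun i => |x i - z i| ^ p) :
    dP p x z = 1 :=
  if_neg h

theorem dP_of_tsum_le_one {x z : ℕ → ℝ} (hs : Summable fun i => |x i - z i| ^ p)
    (h1 : ∑' i, |x i - z i| ^ p ≤ 1) :
    dP p x z = (∑' i, |x i - z i| ^ p) ^ (1 / max 1 p) := by
  rw [dP, if_pos hs, min_eq_right (Real.rpow_le_one (by positivity) h1 (by positivity))]

theorem dP_eq_one_of_not_tsum_le_one {x z : ℕ → ℝ}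
    (h : ¬ ((Summable fun i => |x i - z i| ^ p) ∧ ∑' i, |x i - z i| ^ p ≤ 1)) :
    dP p x z = 1 := by
  by_cases hs : Summable fun i => |x i - z i| ^ p
  · rw [dP, if_pos hs, min_eq_left]
    exact Real.one_le_rpow (le_of_not_ge fun h1 => h ⟨hs, h1⟩) (by positivity)
  · exact dP_of_not_summable hs

theorem dP_lt_of_tsum_lt {x z : ℕ → ℝ} {ε : ℝ} (hε : 0 < ε)
    (hs : Summable fun i => |x i - z i| ^ p) (h : ∑' i, |x i - z i| ^ p < ε ^ max 1 p) :
    dP p x z < ε := by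
  have hmax : 0 < max 1 p := lt_max_of_lt_left one_pos
  rw [dP, if_pos hs]
  calc min 1 ((∑' i, |x i - z i| ^ p) ^ (1 / max 1 p))
      ≤ (∑' i, |x i - z i| ^ p) ^ (1 / max 1 p) := min_le_right _ _
    _ < (ε ^ max 1 p) ^ (1 / max 1 p) := Real.rpow_lt_rpow (by positivity) h (by positivity)
    _ = ε := by rw [one_div, Real.rpow_rpow_inv hε.le hmax.ne']

theorem isQuasiPseudometric_dP (hp : 0 < p) : IsQuasiPseudometric (dP p) where
  dist_self x := by
    have hzero : (fun i => |x i - x i| ^ p) = fun _ => 0 :=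
      funext fun i => by simp [Real.zero_rpow hp.ne']
    rw [dP, hzero, if_pos summable_zero, tsum_zero, Real.zero_rpow (by positivity),
      min_eq_right zero_le_one]
  dist_triangle x y z := by
    by_cases hxy : Summable fun i => |x i - y i| ^ p
    swap
    · linarith [dP_of_not_summable hxy, dP_le_one p x z, dP_nonneg p y z]
    by_cases hyz : Summable fun i => |y i - z i| ^ p
    swap
    · linarith [dP_of_not_summable hyz, dP_le_one p x z, dP_nonneg p x y]
    obtain ⟨hxz, hle⟩ := summable_rpow_and_tsum_rpow_le hp (fun i => abs_nonneg (x i - y i))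
      (fun i => abs_nonneg (y i - z i)) (fun i => abs_nonneg (x i - z i))
      (fun i => abs_sub_le _ _ _) hxy hyz
    rw [dP, dP, dP, if_pos hxz, if_pos hxy, if_pos hyz]
    exact (min_le_min_left 1 hle).trans (min_one_add_le (by positivity) (by positivity))

end dP

theorem dInf_le_dP_rpow {q : ℝ} (hq : 0 < q) (x z : ℕ → ℝ) :
    dInf x z ≤ dP q x z ^ (max 1 q / q) := by
  by_cases h : (Summable fun i => |x i - z i| ^ q) ∧ ∑' i, |x i - z i| ^ q ≤ 1
  · obtain ⟨hs, h1⟩ := h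
    have hS : 0 ≤ ∑' i, |x i - z i| ^ q := by positivity
    rw [dP_of_tsum_le_one hs h1, ← Real.rpow_mul hS,
      show 1 / max 1 q * (max 1 q / q) = q⁻¹ by field_simp]
    refine (dInf_le_min_one fun i => ?_).trans (min_le_right _ _)
    calc |x i - z i| = (|x i - z i| ^ q) ^ q⁻¹ := (Real.rpow_rpow_inv (abs_nonneg _) hq.ne').symm
      _ ≤ (∑' i, |x i - z i| ^ q) ^ q⁻¹ :=
        Real.rpow_le_rpow (by positivity) (hs.le_tsum i fun j _ => by positivity) (by positivity)
  · rw [dP_eq_one_of_not_tsum_le_one h, Real.one_rpow]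
    exact dInf_le_one x z

theorem dP_le_dP_rpow {p q : ℝ} (hp : 0 < p) (hpq : p ≤ q) (x z : ℕ → ℝ) :
    dP q x z ≤ dP p x z ^ (max 1 p / max 1 q) := by
  by_cases h : (Summable fun i => |x i - z i| ^ p) ∧ ∑' i, |x i - z i| ^ p ≤ 1
  · obtain ⟨hs, h1⟩ := h
    have habs_le_one : ∀ i, |x i - z i| ≤ 1 := fun i => by
      by_contra! hgt
      linarith [Real.one_lt_rpow hgt hp, hs.le_tsum i fun j _ => by positivity]
    have hle : ∀ i, |x i - z i| ^ q ≤ |x i - z i| ^ p := fun i =>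
      Real.rpow_le_rpow_of_exponent_ge' (abs_nonneg _) (habs_le_one i) hp.le hpq
    have hsq : Summable fun i => |x i - z i| ^ q :=
      hs.of_nonneg_of_le (fun i => by positivity) hle
    have htsum : ∑' i, |x i - z i| ^ q ≤ ∑' i, |x i - z i| ^ p := hsq.tsum_le_tsum hle hs
    rw [dP_of_tsum_le_one hs h1, dP_of_tsum_le_one hsq (htsum.trans h1),
      ← Real.rpow_mul (by positivity),
      show 1 / max 1 p * (max 1 p / max 1 q) = 1 / max 1 q by field_simp]
    exact Real.rpow_le_rpow (by positivity) htsum (by positivity)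
  · rw [dP_eq_one_of_not_tsum_le_one h, Real.one_rpow]
    exact dP_le_one q x z

theorem exists_dP_lt_and_dP_eq_one {p q : ℝ} (hp : 0 < p) (hpq : p < q) {δ : ℝ} (hδ : 0 < δ) :
    ∃ z : ℕ → ℝ, dP q 0 z < δ ∧ dP p 0 z = 1 := by
  have hpow : ∀ c : ℝ, 0 ≤ c → ∀ r, ∀ i : ℕ,
      |(0 : ℕ → ℝ) i - (c / (i + 1 : ℕ)) ^ p⁻¹| ^ r = (c / (i + 1 : ℕ)) ^ (r / p) := by
    intro c hc r i
    rw [Pi.zero_apply, zero_sub, abs_neg, abs_of_nonneg (by positivity),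
      ← Real.rpow_mul (by positivity), inv_mul_eq_div]
  have hqp : 1 < q / p := (one_lt_div hp).2 hpq
  have hsum : Summable fun i : ℕ => (((i + 1 : ℕ) : ℝ) ^ (q / p))⁻¹ :=
    (summable_nat_add_iff 1).2 (Real.summable_nat_rpow_inv.2 hqp)
  set T := ∑' i : ℕ, (((i + 1 : ℕ) : ℝ) ^ (q / p))⁻¹
  have hsmall : Tendsto (fun c : ℝ => c ^ (q / p) * T) (𝓝[>] 0) (𝓝 0) := by
    have := (Real.continuousAt_rpow_const 0 (q / p) (Or.inr (by linarith))).tendsto.mul_const T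
    simpa [Real.zero_rpow (by linarith : q / p ≠ 0)] using this.mono_left nhdsWithin_le_nhds
  obtain ⟨c, hcT, hc : 0 < c⟩ :=
    ((hsmall.eventually (gt_mem_nhds (by positivity : 0 < δ ^ max 1 q))).and
      self_mem_nhdsWithin).exists
  refine ⟨fun i => (c / (i + 1 : ℕ)) ^ p⁻¹, ?_, dP_of_not_summable ?_⟩
  · have hterm : ∀ i : ℕ,
        (c / (i + 1 : ℕ)) ^ (q / p) = c ^ (q / p) * (((i + 1 : ℕ) : ℝ) ^ (q / p))⁻¹ := fun i => by
      rw [Real.div_rpow hc.le (by positivity), div_eq_mul_inv]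
    refine dP_lt_of_tsum_lt hδ ?_ ?_ <;> simp only [hpow c hc.le, hterm]
    · exact hsum.mul_left _
    · rwa [tsum_mul_left]
  · simp only [hpow c hc.le, div_self hp.ne', Real.rpow_one]
    intro hharmonic
    simp only [div_eq_mul_one_div c, summable_mul_left_iff hc.ne'] at hharmonic
    exact Real.not_summable_one_div_natCast ((summable_nat_add_iff 1).1 hharmonic)

theorem topOf_dInf_lt_pi : topOf dInf < Pi.topologicalSpace := by
  refine lt_of_le_not_ge ((le_iff_nhds _ _).2 fun x => ?_) fun hle => ?_
  · refine tendsto_pi_nhds.2 fun i => ((isQuasiPseudometric_dInf.hasBasis_nhds x).tendsto_iff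
      Metric.nhds_basis_ball).2 fun ε hε => ⟨min 1 ε, lt_min one_pos hε, fun z hz => ?_⟩
    have hmin : min 1 |x i - z i| < min 1 ε := (min_one_abs_sub_le_dInf x z i).trans_lt hz
    rw [Metric.mem_ball, Real.dist_eq, abs_sub_comm]
    exact lt_of_not_ge fun hge => hmin.not_ge (min_le_min_left 1 hge)
  · let tail : ℕ → ℕ → ℝ := fun n i => if n ≤ i then 1 else 0
    have htail : Tendsto tail atTop (𝓝 0) := tendsto_pi_nhds.2 fun i =>
      tendsto_const_nhds.congr' <|
        (eventually_gt_atTop i).mono fun n hn => by simp [tail, hn.not_ge]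
    obtain ⟨n, hn⟩ := ((isQuasiPseudometric_dInf.hasBasis_nhds 0).tendsto_right_iff.1
      (htail.mono_right ((le_iff_nhds _ _).1 hle 0)) 1 one_pos).exists
    have hfar := min_one_abs_sub_le_dInf 0 (tail n) n
    simp only [tail, le_refl, if_true, Pi.zero_apply, zero_sub, abs_neg, abs_one, min_self] at hfar
    exact (hn : dInf 0 (tail n) < 1).not_ge hfar

theorem topOf_dP_lt_topOf_dInf {q : ℝ} (hq : 0 < q) : topOf (dP q) < topOf dInf := by
  refine lt_of_le_not_ge (isQuasiPseudometric_dInf.topOf_le_topOf_of_le_rpow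
    (isQuasiPseudometric_dP hq) (by positivity) (dP_nonneg q) (dInf_le_dP_rpow hq)) ?_
  refine isQuasiPseudometric_dInf.not_topOf_le_topOf (isQuasiPseudometric_dP hq) 0
    fun δ hδ => ⟨fun _ => δ / 2, ?_, (dP_of_not_summable ?_).ge⟩
  · refine (dInf_le_min_one fun i => ?_).trans_lt ((min_le_right _ _).trans_lt (half_lt_self hδ))
    simp [abs_of_pos (half_pos hδ)]
  · simp only [Pi.zero_apply, zero_sub, abs_neg, summable_const_iff]
    exact (Real.rpow_pos_of_pos (abs_pos.2 (half_pos hδ).ne') q).ne'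

theorem topOf_dP_lt_topOf_dP {p q : ℝ} (hp : 0 < p) (hpq : p < q) :
    topOf (dP p) < topOf (dP q) := by
  have hdp := isQuasiPseudometric_dP hp
  have hdq := isQuasiPseudometric_dP (hp.trans hpq)
  refine lt_of_le_not_ge (hdq.topOf_le_topOf_of_le_rpow hdp (by positivity) (dP_nonneg p)
    (dP_le_dP_rpow hp hpq.le)) (hdq.not_topOf_le_topOf hdp 0 fun δ hδ => ?_)
  obtain ⟨z, hzq, hzp⟩ := exists_dP_lt_and_dP_eq_one hp hpq hδ
  exact ⟨z, hzq, hzp.ge⟩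

/-- For `0 < p < q < ∞` the topologies on `ℝ^ℕ` form a strictly increasing chain
`T ⊊ T_∞ ⊊ T_q ⊊ T_p`, where `T` is the product topology and `T_s` is the topology of
the metric `d_s`. -/
theorem topologies_strict_chain (p q : ℝ) (hp : 0 < p) (hpq : p < q) :
    {U | IsOpen[Pi.topologicalSpace] U} ⊂ {U | IsOpen[topOf dInf] U} ∧
    {U | IsOpen[topOf dInf] U} ⊂ {U | IsOpen[topOf (dP q)] U} ∧
    {U | IsOpen[topOf (dP q)] U} ⊂ {U | IsOpen[topOf (dP p)] U} :=
  ⟨setOf_isOpen_ssubset_iff.2 topOf_dInf_lt_pi,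
    setOf_isOpen_ssubset_iff.2 (topOf_dP_lt_topOf_dInf (hp.trans hpq)),
    setOf_isOpen_ssubset_iff.2 (topOf_dP_lt_topOf_dP hp hpq)⟩
end
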